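/- arXiv:1806.07205 — 3 statements merged into one kernel-verified Lean document; each statement's English description precedes it below -/
import Mathlib

section
/- Let f be a smooth symmetric function on Γₙ⁺ satisfying f_i := ∂f/∂λ_i > 0 for all i, and suppose f is concave. If A and B are real symmetric n×n matrices with positive eigenvalues and A ≥ B (i.e., A − B is positive semidefinite), then F(A) ≥ F(B), where F(A) = f(λ(A)). -/
open Matrix Finset

/-- Monotonicity of `f` on the positive cone from positivity of partial derivatives. -/
lemma stmt6_mono_aux (n : ℕ) (f : (Fin n → ℝ) → ℝ) (hf : ContDiff ℝ (⊤ : ℕ∞) f)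
    (hmono : ∀ x : Fin n → ℝ, (∀ i, 0 < x i) → ∀ i, 0 < fderiv ℝ f x (Pi.single i 1))
    {x y : Fin n → ℝ} (hx : ∀ i, 0 < x i) (hxy : x ≤ y) : f x ≤ f y := by
  set p : ℝ → (Fin n → ℝ) := fun t => x + t • (y - x) with hp
  have hpos : ∀ t : ℝ, 0 ≤ t → ∀ i, 0 < p t i := by
    intro t ht i
    have : 0 ≤ t * (y i - x i) := mul_nonneg ht (sub_nonneg.2 (hxy i))
    simpa [hp] using add_pos_of_pos_of_nonneg (hx i) this
  have hder : ∀ t : ℝ, HasDerivAt (fun s => f (p s)) (fderiv ℝ f (p t) (y - x)) t := by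
    intro t
    have h1 : HasDerivAt p (y - x) t := by
      simpa [hp] using ((hasDerivAt_id t).smul_const (y - x)).const_add x
    exact ((hf.differentiable (by simp)).differentiableAt.hasFDerivAt.comp_hasDerivAt t h1)
  have hderiv_nonneg : ∀ t : ℝ, 0 ≤ t → 0 ≤ fderiv ℝ f (p t) (y - x) := by
    intro t ht
    have hyx : (y - x) = ∑ i, (y i - x i) • (Pi.single i 1 : Fin n → ℝ) := by
      funext j
      simp [Finset.sum_apply, Pi.single_apply, Finset.sum_ite_eq', mul_comm]
    rw [hyx, _root_.map_sum]
    refine Finset.sum_nonneg fun i _ => ?_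
    rw [_root_.map_smul]
    exact mul_nonneg (sub_nonneg.2 (hxy i)) (hmono _ (hpos t ht) i).le
  have hmonoOn : MonotoneOn (fun s => f (p s)) (Set.Icc (0:ℝ) 1) := by
    refine monotoneOn_of_deriv_nonneg (convex_Icc 0 1)
      (Continuous.continuousOn (by
        exact (hf.continuous).comp (by continuity))) (fun t ht => ((hder t).differentiableAt).differentiableWithinAt) ?_
    intro t ht
    rw [interior_Icc] at ht
    rw [(hder t).deriv]
    exact hderiv_nonneg t ht.1.le
  have h01 := hmonoOn (Set.mem_Icc.2 ⟨le_refl 0, zero_le_one⟩) (Set.mem_Icc.2 ⟨zero_le_one, le_refl 1⟩) zero_le_one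
  simpa [hp] using h01

/-- If `f` is smooth, symmetric, concave with `f_i > 0` on the positive cone, and `A ≥ B`
are symmetric positive definite matrices, then `F(A) ≥ F(B)` where `F(A) = f(λ(A))`. -/
theorem stmt_6 (n : ℕ) (f : (Fin n → ℝ) → ℝ) (hf : ContDiff ℝ (⊤ : ℕ∞) f)
    (hfsymm : ∀ (σ : Equiv.Perm (Fin n)) (x : Fin n → ℝ), f (x ∘ σ) = f x)
    (hmono : ∀ x : Fin n → ℝ, (∀ i, 0 < x i) → ∀ i, 0 < fderiv ℝ f x (Pi.single i 1))
    (hconc : ConcaveOn ℝ {x | ∀ i, 0 < x i} f)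
    (A B : Matrix (Fin n) (Fin n) ℝ) (hA : A.PosDef) (hB : B.PosDef)
    (hAB : (A - B).PosSemidef) :
    f hB.1.eigenvalues ≤ f hA.1.eigenvalues := by
  set U : Matrix (Fin n) (Fin n) ℝ := (hA.1.eigenvectorUnitary : Matrix (Fin n) (Fin n) ℝ) with hU
  set W : Matrix (Fin n) (Fin n) ℝ := (hB.1.eigenvectorUnitary : Matrix (Fin n) (Fin n) ℝ) with hW
  set μ := hA.1.eigenvalues with hμ
  set ν := hB.1.eigenvalues with hν
  -- the diagonalization of A
  have hUdiag : star U * A * U = diagonal μ := by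
    have := hA.1.conjStarAlgAut_star_eigenvectorUnitary
    simpa [hU, hμ, Unitary.conjStarAlgAut_apply] using this
  -- V = star W * U is orthogonal
  set V : Matrix (Fin n) (Fin n) ℝ := star W * U with hV
  have hVU : V ∈ Matrix.unitaryGroup (Fin n) ℝ :=
    mul_mem (Unitary.star_mem (hB.1.eigenvectorUnitary).2) (hA.1.eigenvectorUnitary).2
  -- d : diagonal of star U * B * U
  set d : Fin n → ℝ := fun i => (star U * B * U) i i with hd
  -- the doubly stochastic matrix
  set S : Matrix (Fin n) (Fin n) ℝ := fun i j => (V j i)^2 with hS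
  have hSd : S ∈ doublyStochastic ℝ (Fin n) := by
    rw [mem_doublyStochastic_iff_sum]
    refine ⟨fun i j => sq_nonneg _, fun i => ?_, fun j => ?_⟩
    · have h1 : (star V * V) i i = 1 := by
        rw [(Matrix.mem_unitaryGroup_iff').mp hVU]; simp
      simpa [hS, Matrix.mul_apply, pow_two] using h1
    · have h1 : (V * star V) j j = 1 := by
        rw [(Matrix.mem_unitaryGroup_iff).mp hVU]; simp
      simpa [hS, Matrix.mul_apply, pow_two] using h1
  -- d i = ∑ j, S i j * ν j
  have hdS : ∀ i, d i = ∑ j, S i j * ν j := by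
    intro i
    have hBdecomp : B = W * diagonal ν * star W := by
      have := hB.1.spectral_theorem
      simpa [hW, hν] using this
    have : star U * B * U = star V * diagonal ν * V := by
      rw [hBdecomp, hV]
      simp only [StarMul.star_mul, star_star]
      noncomm_ring
    rw [hd]
    simp only [this]
    rw [Matrix.mul_apply]
    simp only [Matrix.mul_diagonal, hS, Matrix.star_apply, star_trivial]
    congr 1
    funext j
    ring
  -- Birkhoff
  obtain ⟨w, hw0, hw1, hwS⟩ := exists_eq_sum_perm_of_mem_doublyStochastic hSd
  have hdsum : d = ∑ σ : Equiv.Perm (Fin n), w σ • (ν ∘ σ) := by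
    funext i
    rw [hdS i]
    have hSij : ∀ j, S i j = ∑ σ : Equiv.Perm (Fin n), w σ * σ.permMatrix ℝ i j := by
      intro j
      rw [← hwS]
      simp [Matrix.sum_apply, Matrix.smul_apply, Equiv.Perm.permMatrix, PEquiv.toMatrix_apply, Equiv.toPEquiv_apply, mul_ite]
    calc ∑ j, S i j * ν j = ∑ j, ∑ σ : Equiv.Perm (Fin n), w σ * σ.permMatrix ℝ i j * ν j := by
          simp_rw [hSij, Finset.sum_mul]
      _ = ∑ σ : Equiv.Perm (Fin n), ∑ j, w σ * σ.permMatrix ℝ i j * ν j := Finset.sum_comm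
      _ = ∑ σ : Equiv.Perm (Fin n), w σ * ν (σ i) := by
          refine Finset.sum_congr rfl fun σ _ => ?_
          simp [Equiv.Perm.permMatrix, PEquiv.toMatrix_apply, Equiv.toPEquiv_apply, mul_assoc,
            Finset.sum_ite_eq, mul_ite]
      _ = (∑ σ : Equiv.Perm (Fin n), w σ • (ν ∘ σ)) i := by
          simp [Finset.sum_apply]
  have hνpos : ∀ i, 0 < ν i := hB.eigenvalues_pos
  have hμpos : ∀ i, 0 < μ i := hA.eigenvalues_pos
  -- f ν ≤ f d by concavity and symmetry
  have hmem : ∀ σ : Equiv.Perm (Fin n), (ν ∘ σ) ∈ {x : Fin n → ℝ | ∀ i, 0 < x i} :=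
    fun σ i => hνpos (σ i)
  have hjensen : f ν ≤ f d := by
    have := hconc.le_map_sum (t := Finset.univ) (p := fun σ : Equiv.Perm (Fin n) => ν ∘ σ)
      (fun σ _ => hw0 σ) hw1 (fun σ _ => hmem σ)
    rw [← hdsum] at this
    calc f ν = ∑ σ : Equiv.Perm (Fin n), w σ • f (ν ∘ σ) := by
          simp_rw [fun σ : Equiv.Perm (Fin n) => hfsymm σ ν]
          rw [← Finset.sum_smul, hw1, one_smul]
      _ ≤ f d := this
  -- d ∈ cone
  have hdpos : ∀ i, 0 < d i := by
    have : d ∈ {x : Fin n → ℝ | ∀ i, 0 < x i} := by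
      rw [hdsum]
      exact hconc.1.sum_mem (fun σ _ => hw0 σ) hw1 (fun σ _ => hmem σ)
    exact this
  -- d ≤ μ
  have hdμ : d ≤ μ := by
    intro i
    have hpsd : (star U * (A - B) * U).PosSemidef := by
      have := hAB.conjTranspose_mul_mul_same U
      simpa [Matrix.star_eq_conjTranspose] using this
    have hdiag : 0 ≤ (star U * (A - B) * U) i i := by
      have h := hpsd.diag_nonneg (i := i)
      simpa [dotProduct_single, Matrix.mulVec_single, single_dotProduct] using h
    have hsplit : star U * (A - B) * U = diagonal μ - (star U * B * U) := by
      rw [← hUdiag]; noncomm_ring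
    rw [hsplit] at hdiag
    have : 0 ≤ μ i - d i := by simpa [hd, Matrix.diagonal_apply] using hdiag
    linarith
  exact hjensen.trans (stmt6_mono_aux n f hf hmono hdpos hdμ)
end

section
/- Let g be a real symmetric n×n matrix satisfying g ≤ c·I for a constant c > 0 (i.e., c·I − g is positive semidefinite) and g positive definite, and let H be symmetric positive semidefinite. If f is a symmetric function on Γₙ⁺ ∪ ∂Γₙ⁺, monotone in each variable (f_i ≥ 0) and F(A) = f(λ(A)), then F(H^{1/2} g^{-1} H^{1/2}) ≥ F((1/c) H). -/
/-! Since `0 < g ≤ c`, the spectrum of `g` lies in `(0, c]`, so `g⁻¹ ≥ c⁻¹` in the Loewner order;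
conjugating by `H^{1/2}` gives `H / c ≤ H^{1/2} g⁻¹ H^{1/2}`. The Loewner order passes to the
decreasingly sorted eigenvalues (Weyl's monotonicity theorem): for each `i` some nonzero vector lies
both in the span of the top `i + 1` eigenvectors of the smaller operator and in the span of the
bottom `n - i` eigenvectors of the larger one, and comparing the two quadratic forms there
compares the `i`-th eigenvalues. Monotonicity of `f` finishes the proof. -/

open Matrix

namespace Matrix.PosSemidef

/-- The positive semidefinite square root, as defined in Mathlib (Dec 2024); removed since. -/
noncomputable def sqrt {n : Type*} [Fintype n] [DecidableEq n] {𝕜 : Type*} [RCLike 𝕜]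
    [PartialOrder 𝕜] [StarOrderedRing 𝕜]
    {A : Matrix n n 𝕜} (hA : A.PosSemidef) : Matrix n n 𝕜 :=
  hA.1.eigenvectorUnitary.1 * diagonal ((↑) ∘ Real.sqrt ∘ hA.1.eigenvalues) *
  (star hA.1.eigenvectorUnitary : Matrix n n 𝕜)

end Matrix.PosSemidef

open scoped InnerProductSpace MatrixOrder

theorem Matrix.PosSemidef.sqrt_eq_cfcSqrt {n : Type*} [Fintype n] [DecidableEq n]
    {A : Matrix n n ℝ} (hA : A.PosSemidef) : hA.sqrt = CFC.sqrt A := by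
  rw [CFC.sqrt_eq_real_sqrt A hA.nonneg, cfcₙ_eq_cfc, hA.1.cfc_eq]
  rfl

theorem algebraMap_inv_le_ringInverse {A : Type*} [Ring A] [StarRing A] [PartialOrder A]
    [StarOrderedRing A] [Algebra ℝ A] [TopologicalSpace A]
    [ContinuousFunctionalCalculus ℝ A IsSelfAdjoint] [NonnegSpectrumClass ℝ A] {a : A} {c : ℝ}
    (ha : IsStrictlyPositive a) (hac : a ≤ algebraMap ℝ A c) :
    algebraMap ℝ A c⁻¹ ≤ Ring.inverse a := by
  have hpos : ∀ x ∈ spectrum ℝ a, 0 < x := fun x hx => ha.spectrum_pos hx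
  rw [← cfc_ringInverse_id (R := ℝ) a ha.isUnit ha.isSelfAdjoint,
    algebraMap_le_cfc_iff _ _ _ (continuousOn_inv₀.mono fun x hx => (hpos x hx).ne')
      ha.isSelfAdjoint]
  exact fun x hx =>
    inv_anti₀ (hpos x hx) ((le_algebraMap_iff_spectrum_le ha.isSelfAdjoint).mp hac x hx)

namespace OrthonormalBasis

variable {ι 𝕜 E : Type*} [Fintype ι] [RCLike 𝕜] [NormedAddCommGroup E] [InnerProductSpace 𝕜 E]

theorem inner_eq_zero_of_mem_span_image (b : OrthonormalBasis ι 𝕜 E) {s : Set ι} {x : E}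
    (hx : x ∈ Submodule.span 𝕜 (b '' s)) {j : ι} (hj : j ∉ s) : ⟪b j, x⟫_𝕜 = 0 := by
  refine (Submodule.mem_orthogonal_singleton_iff_inner_right (𝕜 := 𝕜)).mp ?_
  refine Submodule.span_le.mpr ?_ hx
  rintro _ ⟨k, hk, rfl⟩
  exact (Submodule.mem_orthogonal_singleton_iff_inner_right).mpr
    (b.orthonormal.2 fun h => hj (h ▸ hk))

theorem finrank_span_image (b : OrthonormalBasis ι 𝕜 E) (s : Set ι) [Fintype s] :
    Module.finrank 𝕜 (Submodule.span 𝕜 (b '' s)) = Fintype.card s := by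
  rw [Set.image_eq_range]
  exact finrank_span_eq_card (b.orthonormal.linearIndependent.comp _ Subtype.val_injective)

theorem exists_ne_zero_mem_span_Iic_inf_span_Ici [FiniteDimensional 𝕜 E] {n : ℕ}
    (hn : Module.finrank 𝕜 E = n) (b b' : OrthonormalBasis (Fin n) 𝕜 E) (i : Fin n) :
    ∃ x ≠ 0, x ∈ Submodule.span 𝕜 (b '' Set.Iic i) ∧ x ∈ Submodule.span 𝕜 (b' '' Set.Ici i) := by
  by_contra! h
  have hdisj : Disjoint (Submodule.span 𝕜 (b '' Set.Iic i)) (Submodule.span 𝕜 (b' '' Set.Ici i)) :=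
    Submodule.disjoint_def.mpr fun x hx hx' => by_contra fun hx0 => h x hx0 hx hx'
  have hdim := Submodule.finrank_add_finrank_le_of_disjoint hdisj
  rw [b.finrank_span_image, b'.finrank_span_image, hn] at hdim
  simp only [Fintype.card_ofFinset, Finset.mem_Iic, Set.mem_Iic, Fin.card_Iic, Finset.mem_Ici,
    Set.mem_Ici, Fin.card_Ici, implies_true] at hdim
  omega

end OrthonormalBasis

namespace LinearMap.IsSymmetric

variable {𝕜 E : Type*} [RCLike 𝕜] [NormedAddCommGroup E] [InnerProductSpace 𝕜 E]
  [FiniteDimensional 𝕜 E] {T S : E →ₗ[𝕜] E} {n : ℕ}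

theorem re_inner_map_self_eq_sum (hT : T.IsSymmetric) (hn : Module.finrank 𝕜 E = n) (x : E) :
    RCLike.re ⟪T x, x⟫_𝕜 =
      ∑ i, hT.eigenvalues hn i * ‖⟪hT.eigenvectorBasis hn i, x⟫_𝕜‖ ^ 2 := by
  rw [← (hT.eigenvectorBasis hn).sum_inner_mul_inner, map_sum]
  refine Finset.sum_congr rfl fun i _ => ?_
  rw [hT, apply_eigenvectorBasis, inner_smul_right, ← inner_conj_symm x, mul_assoc,
    RCLike.conj_mul]
  norm_cast

theorem eigenvalues_mul_norm_sq_le_re_inner (hT : T.IsSymmetric) (hn : Module.finrank 𝕜 E = n)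
    {i : Fin n} {x : E} (hx : x ∈ Submodule.span 𝕜 (hT.eigenvectorBasis hn '' Set.Iic i)) :
    hT.eigenvalues hn i * ‖x‖ ^ 2 ≤ RCLike.re ⟪T x, x⟫_𝕜 := by
  rw [re_inner_map_self_eq_sum, ← (hT.eigenvectorBasis hn).sum_sq_norm_inner_right, Finset.mul_sum]
  refine Finset.sum_le_sum fun j _ => ?_
  by_cases hj : j ≤ i
  · exact mul_le_mul_of_nonneg_right (hT.eigenvalues_antitone hn hj) (by positivity)
  · simp [(hT.eigenvectorBasis hn).inner_eq_zero_of_mem_span_image hx hj]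

theorem re_inner_le_eigenvalues_mul_norm_sq (hT : T.IsSymmetric) (hn : Module.finrank 𝕜 E = n)
    {i : Fin n} {x : E} (hx : x ∈ Submodule.span 𝕜 (hT.eigenvectorBasis hn '' Set.Ici i)) :
    RCLike.re ⟪T x, x⟫_𝕜 ≤ hT.eigenvalues hn i * ‖x‖ ^ 2 := by
  rw [re_inner_map_self_eq_sum, ← (hT.eigenvectorBasis hn).sum_sq_norm_inner_right, Finset.mul_sum]
  refine Finset.sum_le_sum fun j _ => ?_
  by_cases hj : i ≤ j
  · exact mul_le_mul_of_nonneg_right (hT.eigenvalues_antitone hn hj) (by positivity)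
  · simp [(hT.eigenvectorBasis hn).inner_eq_zero_of_mem_span_image hx hj]

theorem eigenvalues_le_eigenvalues_of_le (hT : T.IsSymmetric) (hS : S.IsSymmetric)
    (hn : Module.finrank 𝕜 E = n) (hTS : T ≤ S) (i : Fin n) :
    hT.eigenvalues hn i ≤ hS.eigenvalues hn i := by
  obtain ⟨x, hx0, hxT, hxS⟩ := OrthonormalBasis.exists_ne_zero_mem_span_Iic_inf_span_Ici hn
    (hT.eigenvectorBasis hn) (hS.eigenvectorBasis hn) i
  have hquad : RCLike.re ⟪T x, x⟫_𝕜 ≤ RCLike.re ⟪S x, x⟫_𝕜 := by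
    simpa [inner_sub_left] using hTS.2 x
  refine le_of_mul_le_mul_right ?_ (by positivity : 0 < ‖x‖ ^ 2)
  calc hT.eigenvalues hn i * ‖x‖ ^ 2 ≤ RCLike.re ⟪T x, x⟫_𝕜 :=
        hT.eigenvalues_mul_norm_sq_le_re_inner hn hxT
    _ ≤ RCLike.re ⟪S x, x⟫_𝕜 := hquad
    _ ≤ hS.eigenvalues hn i * ‖x‖ ^ 2 := hS.re_inner_le_eigenvalues_mul_norm_sq hn hxS

end LinearMap.IsSymmetric

-- `eigenvalues` is the antitone `eigenvalues₀` reindexed by an equivalence that depends only on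
-- the index type, so the comparison is index by index.
theorem Matrix.IsHermitian.eigenvalues_le_eigenvalues_of_le {𝕜 n : Type*} [RCLike 𝕜] [Fintype n]
    [DecidableEq n] {A B : Matrix n n 𝕜} (hA : A.IsHermitian) (hB : B.IsHermitian) (hAB : A ≤ B)
    (j : n) : hA.eigenvalues j ≤ hB.eigenvalues j :=
  LinearMap.IsSymmetric.eigenvalues_le_eigenvalues_of_le _ _ _
    (by rwa [LinearMap.le_def, ← map_sub, Matrix.isPositive_toEuclideanLin_iff]) _

theorem stmt_8_general (n : ℕ) (c : ℝ)
    (g H : Matrix (Fin n) (Fin n) ℝ) (hg : g.PosDef) (hH : H.PosSemidef)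
    (hgc : ((c • (1 : Matrix (Fin n) (Fin n) ℝ)) - g).PosSemidef)
    (f : (Fin n → ℝ) → ℝ)
    (hmono : ∀ x y : Fin n → ℝ, (∀ i, x i ≤ y i) → f x ≤ f y)
    (h1 : ((1 / c) • H).IsHermitian)
    (h2 : (hH.sqrt * g⁻¹ * hH.sqrt).IsHermitian) :
    f h1.eigenvalues ≤ f h2.eigenvalues := by
  have hginv : algebraMap ℝ _ c⁻¹ ≤ g⁻¹ := by
    rw [nonsing_inv_eq_ringInverse]
    refine algebraMap_inv_le_ringInverse hg.isStrictlyPositive ?_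
    rwa [Matrix.le_iff, Algebra.algebraMap_eq_smul_one]
  have hconj : (1 / c) • H ≤ hH.sqrt * g⁻¹ * hH.sqrt := by
    rw [hH.sqrt_eq_cfcSqrt]
    calc (1 / c) • H = CFC.sqrt H * algebraMap ℝ _ c⁻¹ * CFC.sqrt H := by
          rw [← Algebra.commutes, mul_assoc, CFC.sqrt_mul_sqrt_self H hH.nonneg, Algebra.smul_def,
            one_div]
      _ ≤ CFC.sqrt H * g⁻¹ * CFC.sqrt H := conjugate_le_conjugate_of_nonneg hginv (CFC.sqrt_nonneg H)
  exact hmono _ _ (h1.eigenvalues_le_eigenvalues_of_le h2 hconj)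

/-- If `g ≤ c·I` is symmetric positive definite, `H` is symmetric positive semidefinite,
and `f` is a symmetric function, monotone in each variable, with `F(A) = f(λ(A))`, then
`F(H^{1/2} g^{-1} H^{1/2}) ≥ F((1/c) H)`. -/
theorem stmt_8 (n : ℕ) (c : ℝ) (hc : 0 < c)
    (g H : Matrix (Fin n) (Fin n) ℝ) (hg : g.PosDef) (hH : H.PosSemidef)
    (hgc : ((c • (1 : Matrix (Fin n) (Fin n) ℝ)) - g).PosSemidef)
    (f : (Fin n → ℝ) → ℝ)
    (hfsymm : ∀ (σ : Equiv.Perm (Fin n)) (x : Fin n → ℝ), f (x ∘ σ) = f x)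
    (hmono : ∀ x y : Fin n → ℝ, (∀ i, x i ≤ y i) → f x ≤ f y)
    (h1 : ((1 / c) • H).IsHermitian)
    (h2 : (hH.sqrt * g⁻¹ * hH.sqrt).IsHermitian) :
    f h1.eigenvalues ≤ f h2.eigenvalues :=
  stmt_8_general n c g H hg hH hgc f hmono h1 h2
end

section
/- Let λ = (λ_1,…,λ_n) be the eigenvalues of a real symmetric n×n matrix M with M_{αα} ∈ [c₁/2, C] for α = 1,…,n−1 bounded off-diagonal entries |M_{αn}| ≤ C', and M_{nn} ≥ R. Then for R sufficiently large (depending on c₁, C, C', n), after ordering, λ_α ∈ [c₁/4, 2C] for α ≤ n−1 and λ_n ≥ R/2. -/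
/-!
Write an eigenvector of `M` as `(w, s)`, with `s` its last coordinate, and `b = (M_{αn})_{α<n}`.
The two block rows of `M v = μ v`, tested against `w` and `s`, together with Cauchy–Schwarz
for `⟨b, w⟩`, force every eigenvalue `μ` either into `[c₁/4, 2C]` or above `M_{nn}`, once
`M_{nn}` dominates `|b|²/c₁`. All eigenvalues are then nonnegative and their sum, the trace,
lies between `M_{nn}` and `nC + M_{nn}`; so exactly one of them is `≥ M_{nn}` as soon as
`M_{nn} > 2(n+1)C`.
-/

namespace Matrix

section Quadratic

variable {ι : Type*} [DecidableEq ι] {A : Matrix ι ι ℝ} {c : ℝ}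

theorem le_apply_self_of_posSemidef_sub_smul_one (h : (A - c • 1).PosSemidef) (i : ι) :
    c ≤ A i i := by
  simpa using h.diag_nonneg (i := i)

theorem apply_self_le_of_posSemidef_smul_one_sub (h : (c • 1 - A).PosSemidef) (i : ι) :
    A i i ≤ c := by
  simpa using h.diag_nonneg (i := i)

variable [Fintype ι]

theorem le_dotProduct_mulVec_of_posSemidef_sub_smul_one (h : (A - c • 1).PosSemidef)
    (x : ι → ℝ) : c * (x ⬝ᵥ x) ≤ x ⬝ᵥ (A *ᵥ x) := by
  have := h.dotProduct_mulVec_nonneg x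
  simp only [star_trivial, sub_mulVec, smul_mulVec, one_mulVec, dotProduct_sub,
    dotProduct_smul, smul_eq_mul] at this
  linarith

theorem dotProduct_mulVec_le_of_posSemidef_smul_one_sub (h : (c • 1 - A).PosSemidef)
    (x : ι → ℝ) : x ⬝ᵥ (A *ᵥ x) ≤ c * (x ⬝ᵥ x) := by
  have := h.dotProduct_mulVec_nonneg x
  simp only [star_trivial, sub_mulVec, smul_mulVec, one_mulVec, dotProduct_sub,
    dotProduct_smul, smul_eq_mul] at this
  linarith

end Quadratic

section LastRow

variable {R : Type*} [NonUnitalNonAssocSemiring R] {n : ℕ}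

theorem dotProduct_eq_castSucc_add_last (v w : Fin (n + 1) → R) :
    v ⬝ᵥ w =
      (v ∘ Fin.castSucc) ⬝ᵥ (w ∘ Fin.castSucc) + v (Fin.last n) * w (Fin.last n) :=
  Fin.sum_univ_castSucc _

variable (M : Matrix (Fin (n + 1)) (Fin (n + 1)) R) (v : Fin (n + 1) → R)

theorem mulVec_apply_castSucc (α : Fin n) :
    (M *ᵥ v) α.castSucc = (M.submatrix Fin.castSucc Fin.castSucc *ᵥ (v ∘ Fin.castSucc)) α
      + M α.castSucc (Fin.last n) * v (Fin.last n) :=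
  dotProduct_eq_castSucc_add_last _ _

theorem mulVec_apply_last :
    (M *ᵥ v) (Fin.last n) = (fun α => M (Fin.last n) α.castSucc) ⬝ᵥ (v ∘ Fin.castSucc)
      + M (Fin.last n) (Fin.last n) * v (Fin.last n) :=
  dotProduct_eq_castSucc_add_last _ _

end LastRow

end Matrix

open Matrix

/-- The eigen-equations of `M = [[B, b], [bᵀ, m]]` at `(w, s)`, with `W = ⟨w, w⟩`,
`Q = ⟨w, B w⟩` and `p = ⟨b, w⟩`. -/
theorem mem_Icc_or_le_of_block_eigen_eqns {a C K m μ W s Q p : ℝ} (ha : 0 < a) (hK : 0 ≤ K)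
    (hm : a / 2 + 2 * K / a < m) (hW : 0 ≤ W) (hWs : 0 < W + s ^ 2)
    (hQa : a * W ≤ Q) (hQC : Q ≤ C * W) (hpK : p ^ 2 ≤ K * W)
    (hlast : p + m * s = μ * s) (hblock : Q + s * p = μ * W) :
    μ ∈ Set.Icc (a / 2) (2 * C) ∨ m ≤ μ := by
  have hp : p = (μ - m) * s := by linear_combination hlast
  have hQ : Q = μ * W + (m - μ) * s ^ 2 := by rw [hp] at hblock; linear_combination hblock
  have hlow : a / 2 ≤ μ := by
    by_contra! hμ
    have hmμ : 0 < m - μ := by linarith [show 0 ≤ 2 * K / a by positivity]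
    have hWle : a / 2 * W ≤ (m - μ) * s ^ 2 := by nlinarith
    have hps : (m - μ) ^ 2 * s ^ 2 ≤ 2 * K / a * ((m - μ) * s ^ 2) := by
      calc (m - μ) ^ 2 * s ^ 2 = p ^ 2 := by rw [hp]; ring
        _ ≤ K * W := hpK
        _ = 2 * K / a * (a / 2 * W) := by field_simp
        _ ≤ 2 * K / a * ((m - μ) * s ^ 2) := by gcongr
    have hs : s ^ 2 = 0 := by
      by_contra hs
      have hs' : 0 < (m - μ) * s ^ 2 :=
        mul_pos hmμ (lt_of_le_of_ne (sq_nonneg s) (Ne.symm hs))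
      nlinarith
    rw [hs, mul_zero] at hWle
    linarith [mul_pos (half_pos ha) (show 0 < W by linarith)]
  rcases le_or_gt μ (2 * C) with hC | hC
  · exact Or.inl ⟨hlow, hC⟩
  · right
    by_contra! hμm
    have hW0 : W = 0 := by nlinarith [mul_nonneg (sub_nonneg.2 hμm.le) (sq_nonneg s)]
    have hp0 : p = 0 := by nlinarith
    have hs : s ≠ 0 := by rintro rfl; simp [hW0] at hWs
    have : μ - m = 0 := by simpa [hp0, hs] using hp.symm
    linarith

theorem Matrix.IsHermitian.mem_Icc_or_le_of_mulVec_eq_smul {n : ℕ}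
    {M : Matrix (Fin (n + 1)) (Fin (n + 1)) ℝ} (hM : M.IsHermitian) {a C K : ℝ} (ha : 0 < a)
    (hlo : (M.submatrix Fin.castSucc Fin.castSucc - a • 1).PosSemidef)
    (hhi : (C • 1 - M.submatrix Fin.castSucc Fin.castSucc).PosSemidef)
    (hK : ∑ α : Fin n, M α.castSucc (Fin.last n) ^ 2 ≤ K)
    (hm : a / 2 + 2 * K / a < M (Fin.last n) (Fin.last n))
    {μ : ℝ} {v : Fin (n + 1) → ℝ} (hv : v ≠ 0) (hMv : M *ᵥ v = μ • v) :
    μ ∈ Set.Icc (a / 2) (2 * C) ∨ M (Fin.last n) (Fin.last n) ≤ μ := by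
  set B := M.submatrix Fin.castSucc Fin.castSucc
  set b : Fin n → ℝ := fun α => M α.castSucc (Fin.last n)
  set w := v ∘ Fin.castSucc
  set s := v (Fin.last n)
  have hrow : B *ᵥ w + s • b = μ • w := funext fun α => by
    have h := congrFun hMv α.castSucc
    rw [mulVec_apply_castSucc] at h
    simp only [Pi.add_apply, Pi.smul_apply, smul_eq_mul, mul_comm s]
    exact h
  have hlast : b ⬝ᵥ w + M (Fin.last n) (Fin.last n) * s = μ * s := by
    have hsymm : (fun α : Fin n => M (Fin.last n) α.castSucc) = b :=
      funext fun α => by simpa using hM.apply α.castSucc (Fin.last n)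
    simpa [mulVec_apply_last, hsymm] using congrFun hMv (Fin.last n)
  have hblock : w ⬝ᵥ (B *ᵥ w) + s * (b ⬝ᵥ w) = μ * (w ⬝ᵥ w) := by
    simpa [dotProduct_add, dotProduct_smul, dotProduct_comm] using congrArg (w ⬝ᵥ ·) hrow
  have hCS : (b ⬝ᵥ w) ^ 2 ≤ K * (w ⬝ᵥ w) :=
    calc (b ⬝ᵥ w) ^ 2 ≤ (∑ α, b α ^ 2) * ∑ α, w α ^ 2 :=
          Finset.sum_mul_sq_le_sq_mul_sq _ _ _
      _ ≤ K * (w ⬝ᵥ w) := by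
        simp only [dotProduct, ← sq]
        gcongr
  have hpos : 0 < w ⬝ᵥ w + s ^ 2 := by
    rw [sq, ← dotProduct_eq_castSucc_add_last]
    simpa using dotProduct_star_self_pos_iff.2 hv
  exact mem_Icc_or_le_of_block_eigen_eqns ha
    ((Finset.sum_nonneg fun _ _ => sq_nonneg _).trans hK) hm
    (Finset.sum_nonneg fun _ _ => mul_self_nonneg _) hpos
    (le_dotProduct_mulVec_of_posSemidef_sub_smul_one hlo w)
    (dotProduct_mulVec_le_of_posSemidef_smul_one_sub hhi w) hCS hlast hblock

theorem Matrix.IsHermitian.sum_eigenvalues_mem_Icc {n : ℕ}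
    {M : Matrix (Fin (n + 1)) (Fin (n + 1)) ℝ} (hM : M.IsHermitian) {a C : ℝ} (ha : 0 ≤ a)
    (hlo : (M.submatrix Fin.castSucc Fin.castSucc - a • 1).PosSemidef)
    (hhi : (C • 1 - M.submatrix Fin.castSucc Fin.castSucc).PosSemidef) :
    ∑ i, hM.eigenvalues i ∈
      Set.Icc (M (Fin.last n) (Fin.last n)) (n * C + M (Fin.last n) (Fin.last n)) := by
  have htrace : ∑ i, hM.eigenvalues i = ∑ α : Fin n, M α.castSucc α.castSucc
      + M (Fin.last n) (Fin.last n) := by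
    rw [← Fin.sum_univ_castSucc (f := fun i => M i i)]
    simpa [Matrix.trace] using hM.trace_eq_sum_eigenvalues.symm
  have hdiag_lo : 0 ≤ ∑ α : Fin n, M α.castSucc α.castSucc := Finset.sum_nonneg fun α _ =>
    ha.trans (le_apply_self_of_posSemidef_sub_smul_one hlo α)
  have hdiag_hi : ∑ α : Fin n, M α.castSucc α.castSucc ≤ n * C := by
    simpa using Finset.sum_le_sum (s := Finset.univ) fun α _ =>
      apply_self_le_of_posSemidef_smul_one_sub hhi α
  rw [htrace]
  constructor <;> linarith

theorem Fin.exists_perm_last_eq {n : ℕ} (i₀ : Fin (n + 1)) :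
    ∃ σ : Equiv.Perm (Fin (n + 1)),
      σ (Fin.last n) = i₀ ∧ ∀ α : Fin n, σ α.castSucc ≠ i₀ := by
  refine ⟨Equiv.swap i₀ (Fin.last n), Equiv.swap_apply_right _ _, fun α h => ?_⟩
  rw [Equiv.swap_apply_eq_iff, Equiv.swap_apply_left] at h
  exact (Fin.castSucc_lt_last α).ne h

theorem exists_le_and_forall_ne_lt_of_sum {ι : Type*} [Fintype ι] {f : ι → ℝ} {a m : ℝ}
    (hf₀ : ∀ i, 0 ≤ f i) (hf : ∀ i, f i ≤ a ∨ m ≤ f i)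
    (hlo : Fintype.card ι * a < ∑ i, f i) (hhi : ∑ i, f i < 2 * m) :
    ∃ i₀, m ≤ f i₀ ∧ ∀ j ≠ i₀, f j < m := by
  obtain ⟨i₀, -, hi₀⟩ :=
    Finset.exists_lt_of_sum_lt (s := Finset.univ) (f := fun _ : ι => a) (g := f)
      (by rwa [Finset.sum_const, nsmul_eq_mul, Finset.card_univ])
  have hmi₀ := (hf i₀).resolve_left hi₀.not_ge
  refine ⟨i₀, hmi₀, fun j hj => ?_⟩
  by_contra! hmj
  have := Finset.add_le_sum (fun i _ => hf₀ i) (Finset.mem_univ i₀) (Finset.mem_univ j) hj.symm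
  linarith

theorem stmt_16_general (n : ℕ) (c₁ C C' : ℝ) (hc₁ : 0 < c₁) (hC : 0 < C) :
    ∃ R₀ : ℝ, ∀ R : ℝ, R₀ ≤ R →
      ∀ (M : Matrix (Fin (n + 1)) (Fin (n + 1)) ℝ) (hM : M.IsHermitian),
        ((Matrix.of fun α β : Fin n => M α.castSucc β.castSucc)
            - (c₁ / 2) • (1 : Matrix (Fin n) (Fin n) ℝ)).PosSemidef →
        (C • (1 : Matrix (Fin n) (Fin n) ℝ)
            - Matrix.of fun α β : Fin n => M α.castSucc β.castSucc).PosSemidef →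
        (∀ α : Fin n, |M α.castSucc (Fin.last n)| ≤ C') →
        R ≤ M (Fin.last n) (Fin.last n) →
        ∃ σ : Equiv.Perm (Fin (n + 1)),
          (∀ α : Fin n, hM.eigenvalues (σ α.castSucc) ∈ Set.Icc (c₁ / 4) (2 * C)) ∧
          R / 2 ≤ hM.eigenvalues (σ (Fin.last n)) := by
  refine ⟨c₁ / 4 + 4 * (n * C' ^ 2) / c₁ + 2 * (n + 1) * C,
    fun R hR M hM hlo hhi hb hRm => ?_⟩
  set m := M (Fin.last n) (Fin.last n)
  have hR₀ : 0 ≤ 4 * (n * C' ^ 2) / c₁ := by positivity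
  have hR₀' : 0 < 2 * (n + 1) * C := by positivity
  have hK : ∑ α : Fin n, M α.castSucc (Fin.last n) ^ 2 ≤ n * C' ^ 2 := by
    simpa using Finset.sum_le_sum (s := Finset.univ) fun α _ =>
      sq_le_sq' (abs_le.1 (hb α)).1 (abs_le.1 (hb α)).2
  have hgap : c₁ / 2 / 2 + 2 * (n * C' ^ 2) / (c₁ / 2) < m :=
    calc _ = c₁ / 4 + 4 * (n * C' ^ 2) / c₁ := by ring
      _ < m := by linarith
  have hsplit (i) : hM.eigenvalues i ∈ Set.Icc (c₁ / 4) (2 * C) ∨ m ≤ hM.eigenvalues i := by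
    have := hM.mem_Icc_or_le_of_mulVec_eq_smul (half_pos hc₁) hlo hhi hK hgap
      ((WithLp.ofLp_eq_zero 2).ne.2 (hM.eigenvectorBasis.orthonormal.ne_zero i))
      (hM.mulVec_eigenvectorBasis i)
    rwa [div_div, show (2 : ℝ) * 2 = 4 by norm_num] at this
  obtain ⟨htr_lo, htr_hi⟩ := hM.sum_eigenvalues_mem_Icc (half_pos hc₁).le hlo hhi
  obtain ⟨i₀, hi₀, hlt⟩ :=
    exists_le_and_forall_ne_lt_of_sum (f := hM.eigenvalues) (a := 2 * C)
      (fun i => (hsplit i).elim (fun h => by linarith [h.1]) (fun h => by linarith))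
      (fun i => (hsplit i).imp_left fun h => h.2)
      (by rw [Fintype.card_fin]; push_cast; linarith)
      (by linarith)
  obtain ⟨σ, hσ, hσne⟩ := Fin.exists_perm_last_eq i₀
  refine ⟨σ, fun α => (hsplit _).resolve_right (hlt _ (hσne α)).not_ge, ?_⟩
  rw [hσ]
  linarith

/-- Eigenvalue splitting (Caffarelli–Nirenberg–Spruck, Lemma 1.2): if the leading
`(n)×(n)` block of a symmetric `(n+1)×(n+1)` matrix `M` satisfies
`(c₁/2)·I ≤ block ≤ C·I`, the mixed entries `|M_{αn}| ≤ C'`, and `M_{nn} ≥ R` with `R`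
sufficiently large, then after ordering the eigenvalues satisfy `λ_α ∈ [c₁/4, 2C]`
for `α ≤ n−1` and `λ_n ≥ R/2`. -/
theorem stmt_16 (n : ℕ) (c₁ C C' : ℝ) (hc₁ : 0 < c₁) (hC : 0 < C) (hC' : 0 ≤ C') :
    ∃ R₀ : ℝ, ∀ R : ℝ, R₀ ≤ R →
      ∀ (M : Matrix (Fin (n + 1)) (Fin (n + 1)) ℝ) (hM : M.IsHermitian),
        ((Matrix.of fun α β : Fin n => M α.castSucc β.castSucc)
            - (c₁ / 2) • (1 : Matrix (Fin n) (Fin n) ℝ)).PosSemidef →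
        (C • (1 : Matrix (Fin n) (Fin n) ℝ)
            - Matrix.of fun α β : Fin n => M α.castSucc β.castSucc).PosSemidef →
        (∀ α : Fin n, |M α.castSucc (Fin.last n)| ≤ C') →
        R ≤ M (Fin.last n) (Fin.last n) →
        ∃ σ : Equiv.Perm (Fin (n + 1)),
          (∀ α : Fin n, hM.eigenvalues (σ α.castSucc) ∈ Set.Icc (c₁ / 4) (2 * C)) ∧
          R / 2 ≤ hM.eigenvalues (σ (Fin.last n)) :=
  stmt_16_general n c₁ C C' hc₁ hC
end
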